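/- Fix Υ > 0, let f_Υ(z) = 1/(Υ⁻¹eᶻ + 1), w(z) = z² f_Υ(z) on (0,∞), and let ⟨h₁,h₂⟩ = ∫₀^∞ h₁h₂ w dz. (i) For any polynomials p, q, the integration-by-parts identity holds: ∫₀^∞ z f_Υ'(z) p(z) q(z) z² dz + ⟨z p', q⟩ = −3⟨p,q⟩ − ⟨p, z q'⟩. (ii) Consequently, if (ψ̂_i)_i are orthonormal polynomials for this inner product with deg ψ̂_i = i, then the matrix A^k_i = ⟨(z/f_Υ)(∂_z f_Υ) ψ̂_i, ψ̂_k⟩ + ⟨z ∂_z ψ̂_i, ψ̂_k⟩ satisfies A^k_i = −3⟨ψ̂_i,ψ̂_k⟩ − ⟨ψ̂_i, z ∂_z ψ̂_k⟩, and A^k_i = 0 whenever k < i (A is lower triangular). -/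

import Mathlib

open MeasureTheory Real Set Polynomial

/-! The weight decays like `e^{-z}`, and so does `f_Υ' = f_Υ (f_Υ - 1)`; hence every polynomial
is integrable against `f_Υ` and `f_Υ'` on `(0, ∞)` and `P f_Υ → 0` at infinity. Integrating
`(z³ p q f_Υ)'` over `(0, ∞)` gives (i), the boundary term at `0` being killed by the factor `z³`;
the formula for `A` is (i) for `p = ψ̂_i`, `q = ψ̂_k`, since `(z / f_Υ) f_Υ' w = z³ f_Υ'`.
Finally `ψ̂_0, …, ψ̂_{i-1}` span the polynomials of degree `< i`, so `ψ̂_i` is orthogonal to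
`z ψ̂_k'`, whose degree is at most `k`. -/

open Filter Asymptotics Topology

namespace Polynomial

theorem degree_X_mul_derivative_le {R : Type*} [Semiring R] (p : R[X]) :
    (X * derivative p).degree ≤ p.degree := by
  rw [degree_le_iff_coeff_zero]
  rintro (_ | m) hm
  · exact coeff_X_mul_zero _
  · rw [coeff_X_mul, coeff_derivative, coeff_eq_zero_of_degree_lt (by exact_mod_cast hm), zero_mul]

theorem Sequence.map_eq_zero_of_degree_lt {K M : Type*} [Field K] [AddCommGroup M] [Module K M]
    (S : Sequence K) (L : K[X] →ₗ[K] M) {n : ℕ} (hL : ∀ j < n, L (S j) = 0) {r : K[X]}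
    (hr : r.degree < n) : L r = 0 := by
  have hspan : r ∈ Submodule.span K (S '' Iio n) := by
    rw [S.span_degreeLT fun i _ => (leadingCoeff_ne_zero.2 (S.ne_zero i)).isUnit]
    exact mem_degreeLT.2 hr
  refine (Submodule.span_le (p := LinearMap.ker L)).2 ?_ hspan
  rintro _ ⟨j, hj, rfl⟩
  exact hL j hj

noncomputable def integralAgainst (s : Set ℝ) (g : ℝ → ℝ)
    (hg : ∀ Q : ℝ[X], IntegrableOn (fun z => Q.eval z * g z) s) : ℝ[X] →ₗ[ℝ] ℝ where
  toFun Q := ∫ z in s, Q.eval z * g z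
  map_add' P Q := by simp only [eval_add, add_mul]; exact integral_add (hg P) (hg Q)
  map_smul' c Q := by simp only [eval_smul, smul_eq_mul, mul_assoc, integral_const_mul]; rfl

theorem integralAgainst_apply (s : Set ℝ) (g : ℝ → ℝ)
    (hg : ∀ Q : ℝ[X], IntegrableOn (fun z => Q.eval z * g z) s) (Q : ℝ[X]) :
    integralAgainst s g hg Q = ∫ z in s, Q.eval z * g z := rfl

theorem Sequence.integral_eval_mul_eq_zero_of_degree_lt (S : Sequence ℝ) {s : Set ℝ} {W : ℝ → ℝ}
    (hW : ∀ Q : ℝ[X], IntegrableOn (fun z => Q.eval z * W z) s)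
    (horth : ∀ i j, j < i → ∫ z in s, (S i).eval z * (S j).eval z * W z = 0)
    {i : ℕ} {r : ℝ[X]} (hr : r.degree < i) :
    ∫ z in s, (S i).eval z * r.eval z * W z = 0 := by
  have hSW : ∀ Q : ℝ[X], IntegrableOn (fun z => Q.eval z * ((S i).eval z * W z)) s := fun Q =>
    (hW (Q * S i)).congr_fun_ae (Eventually.of_forall fun z => by simp only [eval_mul]; ring)
  have key := S.map_eq_zero_of_degree_lt (integralAgainst s _ hSW) (fun j hj => ?_) hr
  · simpa only [integralAgainst_apply, mul_left_comm, mul_assoc] using key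
  · simpa only [integralAgainst_apply, mul_left_comm, mul_assoc] using horth i j hj

section ExpDecay

variable {g : ℝ → ℝ} {b : ℝ}

theorem isBigO_eval_mul_of_isBigO_exp_neg (Q : ℝ[X]) (hb : 0 < b)
    (hg : g =O[atTop] fun z => exp (-b * z)) :
    (fun z => Q.eval z * g z) =O[atTop] fun z => exp (-(b / 2) * z) := by
  have hQ : (fun z => Q.eval z) =O[atTop] fun z => exp (b / 2 * z) := by
    have := isBigO_atTop_of_degree_le Q (X ^ Q.natDegree) (by simp [degree_le_natDegree])
    simp only [eval_pow, eval_X] at this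
    exact this.trans (isLittleO_pow_exp_pos_mul_atTop _ (half_pos hb)).isBigO
  refine (hQ.mul hg).congr_right fun z => ?_
  rw [← exp_add]
  ring_nf

theorem integrableOn_Ioi_eval_mul_of_isBigO_exp_neg (Q : ℝ[X]) (a : ℝ) (hb : 0 < b)
    (hcont : Continuous g) (hg : g =O[atTop] fun z => exp (-b * z)) :
    IntegrableOn (fun z => Q.eval z * g z) (Ioi a) :=
  integrable_of_isBigO_exp_neg (half_pos hb) (Q.continuous.mul hcont).continuousOn
    (isBigO_eval_mul_of_isBigO_exp_neg Q hb hg)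

theorem tendsto_eval_mul_of_isBigO_exp_neg (Q : ℝ[X]) (hb : 0 < b)
    (hg : g =O[atTop] fun z => exp (-b * z)) :
    Tendsto (fun z => Q.eval z * g z) atTop (𝓝 0) := by
  refine (isBigO_eval_mul_of_isBigO_exp_neg Q hb hg).trans_tendsto ?_
  exact tendsto_exp_atBot.comp (tendsto_id.const_mul_atTop_of_neg (by linarith))

end ExpDecay

section ByParts

variable {f : ℝ → ℝ} (hf : ContDiff ℝ 1 f) (hb : 0 < b)
  (hf_decay : f =O[atTop] fun z => exp (-b * z))
  (hf'_decay : deriv f =O[atTop] fun z => exp (-b * z))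
include hf hb hf_decay hf'_decay

theorem integral_Ioi_derivative_mul_add_eval_mul_deriv_eq_zero {P : ℝ[X]} (hP : P.eval 0 = 0) :
    ∫ z in Ioi 0, (derivative P).eval z * f z + P.eval z * deriv f z = 0 := by
  have := integral_Ioi_of_hasDerivAt_of_tendsto
    (P.continuous.mul hf.continuous).continuousWithinAt
    (fun z _ => (P.hasDerivAt z).mul ((hf.differentiable one_ne_zero z).hasDerivAt))
    ((integrableOn_Ioi_eval_mul_of_isBigO_exp_neg _ 0 hb hf.continuous hf_decay).add
      (integrableOn_Ioi_eval_mul_of_isBigO_exp_neg _ 0 hb (hf.continuous_deriv le_rfl) hf'_decay))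
    (tendsto_eval_mul_of_isBigO_exp_neg P hb hf_decay)
  simpa [hP] using this

theorem integral_Ioi_weighted_by_parts (p q : ℝ[X]) :
    (∫ z in Ioi 0, z * deriv f z * p.eval z * q.eval z * z ^ 2)
      + (∫ z in Ioi 0, (z * (derivative p).eval z) * q.eval z * (z ^ 2 * f z))
    = -3 * (∫ z in Ioi 0, p.eval z * q.eval z * (z ^ 2 * f z))
      - ∫ z in Ioi 0, p.eval z * (z * (derivative q).eval z) * (z ^ 2 * f z) := by
  have hIf := fun Q => integrableOn_Ioi_eval_mul_of_isBigO_exp_neg Q 0 hb hf.continuous hf_decay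
  have hIf' := fun Q => integrableOn_Ioi_eval_mul_of_isBigO_exp_neg Q 0 hb
    (hf.continuous_deriv le_rfl) hf'_decay
  have hder : derivative (X ^ 3 * p * q) =
      X ^ 3 * derivative p * q + (3 : ℝ) • (X ^ 2 * p * q) + X ^ 3 * p * derivative q := by
    simp only [derivative_mul, derivative_X_pow, smul_eq_C_mul, Nat.cast_ofNat]
    ring
  have h := integral_Ioi_derivative_mul_add_eval_mul_deriv_eq_zero hf hb hf_decay hf'_decay
    (P := X ^ 3 * p * q) (by simp)
  rw [integral_add (hIf _) (hIf' _)] at h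
  change integralAgainst (Ioi 0) f hIf _ + integralAgainst (Ioi 0) (deriv f) hIf' _ = 0 at h
  rw [hder, map_add, map_add, map_smul] at h
  simp only [integralAgainst_apply, eval_mul, eval_pow, eval_X, smul_eq_mul] at h
  ring_nf at h ⊢
  simp only [mul_comm, mul_left_comm, mul_assoc] at h ⊢
  linarith

end ByParts

end Polynomial

noncomputable def fermiDirac (Υ z : ℝ) : ℝ := (Υ⁻¹ * exp z + 1)⁻¹

section FermiDirac

variable {Υ : ℝ}

theorem one_le_inv_mul_exp_add_one (hΥ : 0 ≤ Υ) (z : ℝ) : 1 ≤ Υ⁻¹ * exp z + 1 := by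
  have : 0 ≤ Υ⁻¹ * exp z := by positivity
  linarith

theorem fermiDirac_pos (hΥ : 0 ≤ Υ) (z : ℝ) : 0 < fermiDirac Υ z :=
  inv_pos.2 (zero_lt_one.trans_le (one_le_inv_mul_exp_add_one hΥ z))

theorem fermiDirac_le_one (hΥ : 0 ≤ Υ) (z : ℝ) : fermiDirac Υ z ≤ 1 :=
  inv_le_one_of_one_le₀ (one_le_inv_mul_exp_add_one hΥ z)

theorem fermiDirac_le_mul_exp_neg (hΥ : 0 < Υ) (z : ℝ) : fermiDirac Υ z ≤ Υ * exp (-z) := by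
  rw [fermiDirac, exp_neg, show Υ * (exp z)⁻¹ = (Υ⁻¹ * exp z)⁻¹ by rw [mul_inv, inv_inv]]
  exact inv_anti₀ (by positivity) (by linarith)

theorem contDiff_fermiDirac (hΥ : 0 ≤ Υ) {n : WithTop ℕ∞} : ContDiff ℝ n (fermiDirac Υ) :=
  ((contDiff_const.mul contDiff_exp).add contDiff_const).inv fun z =>
    (zero_lt_one.trans_le (one_le_inv_mul_exp_add_one hΥ z)).ne'

theorem deriv_fermiDirac (hΥ : 0 ≤ Υ) (z : ℝ) :
    deriv (fermiDirac Υ) z = fermiDirac Υ z * (fermiDirac Υ z - 1) := by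
  have hden := (zero_lt_one.trans_le (one_le_inv_mul_exp_add_one hΥ z)).ne'
  have hd : HasDerivAt (fermiDirac Υ) _ z :=
    (((hasDerivAt_exp z).const_mul Υ⁻¹).add_const 1).inv hden
  rw [hd.deriv, fermiDirac]
  field_simp
  ring

theorem isBigO_fermiDirac (hΥ : 0 < Υ) : fermiDirac Υ =O[atTop] fun z => exp (-1 * z) :=
  IsBigO.of_bound Υ (Eventually.of_forall fun z => by
    rw [norm_of_nonneg (fermiDirac_pos hΥ.le z).le, norm_of_nonneg (exp_pos _).le, neg_one_mul]
    exact fermiDirac_le_mul_exp_neg hΥ z)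

theorem isBigO_deriv_fermiDirac (hΥ : 0 < Υ) :
    deriv (fermiDirac Υ) =O[atTop] fun z => exp (-1 * z) := by
  refine (IsBigO.of_bound 1 (Eventually.of_forall fun z => ?_)).trans (isBigO_fermiDirac hΥ)
  have h0 := fermiDirac_pos hΥ.le z
  have h1 := fermiDirac_le_one hΥ.le z
  rw [deriv_fermiDirac hΥ.le, norm_mul, one_mul]
  exact mul_le_of_le_one_right (norm_nonneg _) (by rw [norm_of_nonpos (by linarith)]; linarith)

end FermiDirac

/-- (i) Integration by parts for the chemical non-equilibrium weight
`w(z) = z²f_Υ(z)`, `f_Υ(z) = 1/(Υ⁻¹eᶻ+1)`: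
`∫₀^∞ z f_Υ' p q z² dz + ⟨zp', q⟩ = −3⟨p,q⟩ − ⟨p, zq'⟩` for all polynomials `p, q`.
(ii) Consequently the matrix `A^k_i = ⟨(z/f_Υ)(∂_zf_Υ)ψ̂_i, ψ̂_k⟩ + ⟨z∂_zψ̂_i, ψ̂_k⟩`
satisfies `A^k_i = −3⟨ψ̂_i,ψ̂_k⟩ − ⟨ψ̂_i, z∂_zψ̂_k⟩` and is lower triangular. -/
theorem A_matrix_integration_by_parts_and_lower_triangularity
    (Υ : ℝ) (hΥ : 0 < Υ)
    (fΥ w : ℝ → ℝ)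
    (hfΥ : ∀ z, fΥ z = (Υ⁻¹ * Real.exp z + 1)⁻¹)
    (hw : ∀ z, w z = z ^ 2 * fΥ z)
    (ψ : ℕ → Polynomial ℝ)
    (hdeg : ∀ i, (ψ i).degree = (i : ℕ))
    (horth : ∀ i j, (∫ z in Ioi (0:ℝ), (ψ i).eval z * (ψ j).eval z * w z)
      = if i = j then 1 else 0)
    (A : ℕ → ℕ → ℝ)
    (hA : ∀ k i, A k i =
      (∫ z in Ioi (0:ℝ),
        (z / fΥ z * deriv fΥ z * (ψ i).eval z) * (ψ k).eval z * w z)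
      + ∫ z in Ioi (0:ℝ),
        (z * (Polynomial.derivative (ψ i)).eval z) * (ψ k).eval z * w z) :
    (∀ p q : Polynomial ℝ,
      (∫ z in Ioi (0:ℝ), z * deriv fΥ z * p.eval z * q.eval z * z ^ 2)
        + (∫ z in Ioi (0:ℝ),
            (z * (Polynomial.derivative p).eval z) * q.eval z * w z)
      = -3 * (∫ z in Ioi (0:ℝ), p.eval z * q.eval z * w z)
        - ∫ z in Ioi (0:ℝ),
            p.eval z * (z * (Polynomial.derivative q).eval z) * w z)
    ∧ (∀ k i : ℕ,
        A k i
          = -3 * (∫ z in Ioi (0:ℝ), (ψ i).eval z * (ψ k).eval z * w z)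
            - ∫ z in Ioi (0:ℝ),
                (ψ i).eval z * (z * (Polynomial.derivative (ψ k)).eval z) * w z)
    ∧ (∀ k i : ℕ, k < i → A k i = 0) := by
  obtain rfl : fΥ = fermiDirac Υ := funext hfΥ
  obtain rfl : w = fun z => z ^ 2 * fermiDirac Υ z := funext hw
  have hIBP := integral_Ioi_weighted_by_parts (contDiff_fermiDirac hΥ.le) one_pos
    (isBigO_fermiDirac hΥ) (isBigO_deriv_fermiDirac hΥ)
  have hA' : ∀ k i, A k i =
      -3 * (∫ z in Ioi (0:ℝ), (ψ i).eval z * (ψ k).eval z * (z ^ 2 * fermiDirac Υ z))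
        - ∫ z in Ioi (0:ℝ),
            (ψ i).eval z * (z * (derivative (ψ k)).eval z) * (z ^ 2 * fermiDirac Υ z) := by
    intro k i
    rw [hA, ← hIBP]
    congr 2 with z
    field_simp [(fermiDirac_pos hΥ.le z).ne']
  refine ⟨hIBP, hA', fun k i hki => ?_⟩
  have hW : ∀ Q : ℝ[X], IntegrableOn (fun z => Q.eval z * (z ^ 2 * fermiDirac Υ z)) (Ioi 0) :=
    fun Q => (integrableOn_Ioi_eval_mul_of_isBigO_exp_neg (Q * X ^ 2) 0 one_pos
      (contDiff_fermiDirac hΥ.le (n := 0)).continuous (isBigO_fermiDirac hΥ)).congr_fun_ae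
        (Eventually.of_forall fun z => by simp only [eval_mul, eval_pow, eval_X]; ring)
  have hXψ : ∫ z in Ioi (0:ℝ),
      (ψ i).eval z * (X * derivative (ψ k)).eval z * (z ^ 2 * fermiDirac Υ z) = 0 :=
    Sequence.integral_eval_mul_eq_zero_of_degree_lt ⟨ψ, hdeg⟩ hW
      (fun i j hji => by simpa [hji.ne'] using horth i j)
      ((degree_X_mul_derivative_le _).trans_lt (by simpa [hdeg] using hki))
  simp only [eval_mul, eval_X] at hXψ
  rw [hA', horth, if_neg hki.ne', hXψ]
  ring
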